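/- In the canonical representation, the FRT relations hold for the Alexander-Conway R-matrix: R₂₁ L⁺₁ L⁺₂ = L⁺₂ L⁺₁ R₂₁, R₂₁ L⁻₁ L⁻₂ = L⁻₂ L⁻₁ R₂₁, and R₂₁ L⁺₁ L⁻₂ = L⁻₂ L⁺₁ R₂₁, where L⁺ and L⁻ are the 2×2 matrices over M₂(ℂ) given by L⁺ = [[ρ(K₁), 0],[(q−q⁻¹)ρ(X⁺), ρ(K₂)⁻¹]] and L⁻ = [[ρ(K₁)⁻¹, −(q−q⁻¹)ρ(X⁻)],[0, ρ(K₂)]]. -/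

import Mathlib

open Matrix

noncomputable section

def ρXp : Matrix (Fin 2) (Fin 2) ℂ := !![0, 1; 0, 0]
def ρXm : Matrix (Fin 2) (Fin 2) ℂ := !![0, 0; 1, 0]
def ρK₁ (q : ℂ) : Matrix (Fin 2) (Fin 2) ℂ := !![q, 0; 0, 1]
def ρK₂ (q : ℂ) : Matrix (Fin 2) (Fin 2) ℂ := !![1, 0; 0, -q]

/-- `L⁺` as a 2×2 matrix with entries in `M₂(ℂ)`. -/
def Lp (q : ℂ) : Matrix (Fin 2) (Fin 2) (Matrix (Fin 2) (Fin 2) ℂ) :=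
  !![ρK₁ q,            0;
     (q - q⁻¹) • ρXp,  (ρK₂ q)⁻¹]

/-- `L⁻` as a 2×2 matrix with entries in `M₂(ℂ)`. -/
def Lm (q : ℂ) : Matrix (Fin 2) (Fin 2) (Matrix (Fin 2) (Fin 2) ℂ) :=
  !![(ρK₁ q)⁻¹,  (-(q - q⁻¹)) • ρXm;
     0,          ρK₂ q]

/-- `L±₁ = Σ_{i,k} E_{ik} ⊗ I₂ ⊗ (L±)_{ik}` acting in `ℂ² ⊗ ℂ² ⊗ ℂ²`. -/
def L1 (L : Matrix (Fin 2) (Fin 2) (Matrix (Fin 2) (Fin 2) ℂ)) :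
    Matrix (Fin 2 × Fin 2 × Fin 2) (Fin 2 × Fin 2 × Fin 2) ℂ :=
  Matrix.of fun x y => (if x.2.1 = y.2.1 then 1 else 0) * L x.1 y.1 x.2.2 y.2.2

/-- `L±₂ = Σ_{i,k} I₂ ⊗ E_{ik} ⊗ (L±)_{ik}`. -/
def L2 (L : Matrix (Fin 2) (Fin 2) (Matrix (Fin 2) (Fin 2) ℂ)) :
    Matrix (Fin 2 × Fin 2 × Fin 2) (Fin 2 × Fin 2 × Fin 2) ℂ :=
  Matrix.of fun x y => (if x.1 = y.1 then 1 else 0) * L x.2.1 y.2.1 x.2.2 y.2.2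

/-- The Alexander–Conway matrix, index pairs ordered `(1,1),(1,2),(2,1),(2,2)`. -/
def RAC (q : ℂ) : Matrix (Fin 2 × Fin 2) (Fin 2 × Fin 2) ℂ :=
  Matrix.of fun p p' =>
    if p = (0, 0) ∧ p' = (0, 0) then q
    else if p = (0, 1) ∧ p' = (0, 1) then 1
    else if p = (0, 1) ∧ p' = (1, 0) then q - q⁻¹
    else if p = (1, 0) ∧ p' = (1, 0) then 1
    else if p = (1, 1) ∧ p' = (1, 1) then -q⁻¹
    else 0

/-- `R₂₁ ⊗ I₂` where `R₂₁ = P R P` acts on the two auxiliary legs. -/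
def R21 (q : ℂ) : Matrix (Fin 2 × Fin 2 × Fin 2) (Fin 2 × Fin 2 × Fin 2) ℂ :=
  Matrix.of fun x y =>
    RAC q (x.2.1, x.1) (y.2.1, y.1) * (if x.2.2 = y.2.2 then 1 else 0)

/-!
`R₂₁ ⊗ 1` only mixes the two auxiliary legs, so each FRT relation amounts to sixteen identities
between products of entries of `L±` in `M₂(ℂ)`, one for each pair of auxiliary row and column
indices. Since the Alexander–Conway matrix has only five nonzero entries, these are the familiar
relations between `ρ(K₁)`, `ρ(K₂)` and `ρ(X±)`, corrected by the `q - q⁻¹` terms coming from the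
off-diagonal entry; they are checked directly once `ρ(K₁)⁻¹` and `ρ(K₂)⁻¹` are made explicit.
-/

section Legs

variable (A B : Matrix (Fin 2) (Fin 2) (Matrix (Fin 2) (Fin 2) ℂ))

lemma L1_mul_L2_apply (i j k l m n : Fin 2) :
    (L1 A * L2 B) (i, j, k) (l, m, n) = (A i l * B j m) k n := by
  simp only [L1, L2, Matrix.mul_apply, Fintype.sum_prod_type, Matrix.of_apply]
  fin_cases j <;> fin_cases l <;> simp [Fin.sum_univ_two]

lemma L2_mul_L1_apply (i j k l m n : Fin 2) :
    (L2 B * L1 A) (i, j, k) (l, m, n) = (B j m * A i l) k n := by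
  simp only [L1, L2, Matrix.mul_apply, Fintype.sum_prod_type, Matrix.of_apply]
  fin_cases i <;> fin_cases m <;> simp [Fin.sum_univ_two]

end Legs

section R21

variable (q : ℂ) (M : Matrix (Fin 2 × Fin 2 × Fin 2) (Fin 2 × Fin 2 × Fin 2) ℂ)

lemma R21_mul_apply (i j k : Fin 2) (y : Fin 2 × Fin 2 × Fin 2) :
    (R21 q * M) (i, j, k) y = ∑ a, ∑ b, RAC q (j, i) (b, a) * M (a, b, k) y := by
  simp only [R21, Matrix.mul_apply, Fintype.sum_prod_type, Matrix.of_apply]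
  fin_cases k <;> simp [Fin.sum_univ_two]

lemma mul_R21_apply (x : Fin 2 × Fin 2 × Fin 2) (l m n : Fin 2) :
    (M * R21 q) x (l, m, n) = ∑ a, ∑ b, M x (a, b, n) * RAC q (b, a) (m, l) := by
  simp only [R21, Matrix.mul_apply, Fintype.sum_prod_type, Matrix.of_apply]
  fin_cases n <;> simp [Fin.sum_univ_two]

end R21

lemma R21_mul_L1_mul_L2_of_blocks (q : ℂ)
    (A B : Matrix (Fin 2) (Fin 2) (Matrix (Fin 2) (Fin 2) ℂ))
    (h : ∀ i j l m, ∑ a, ∑ b, RAC q (j, i) (b, a) • (A a l * B b m) =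
      ∑ a, ∑ b, RAC q (b, a) (m, l) • (B j b * A i a)) :
    R21 q * (L1 A * L2 B) = L2 B * L1 A * R21 q := by
  ext ⟨i, j, k⟩ ⟨l, m, n⟩
  rw [R21_mul_apply, mul_R21_apply]
  simp only [L1_mul_L2_apply, L2_mul_L1_apply]
  simpa [Matrix.sum_apply, mul_comm] using congrFun₂ (h i j l m) k n

section Explicit

variable {q : ℂ}

lemma inv_ρK₁ (hq : q ≠ 0) : (ρK₁ q)⁻¹ = !![q⁻¹, 0; 0, 1] :=
  Matrix.inv_eq_left_inv (by simp [ρK₁, Matrix.one_fin_two, hq])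

lemma inv_ρK₂ (hq : q ≠ 0) : (ρK₂ q)⁻¹ = !![1, 0; 0, -q⁻¹] :=
  Matrix.inv_eq_left_inv (by simp [ρK₂, Matrix.one_fin_two, hq])

lemma Lp_eq (hq : q ≠ 0) :
    Lp q = !![!![q, 0; 0, 1], 0; (q - q⁻¹) • !![0, 1; 0, 0], !![1, 0; 0, -q⁻¹]] := by
  rw [Lp, inv_ρK₂ hq, ρK₁, ρXp]

lemma Lm_eq (hq : q ≠ 0) :
    Lm q = !![!![q⁻¹, 0; 0, 1], (-(q - q⁻¹)) • !![0, 0; 1, 0]; 0, !![1, 0; 0, -q]] := by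
  rw [Lm, inv_ρK₁ hq, ρK₂, ρXm]

lemma R21_mul_L1_Lp_mul_L2_Lp (hq : q ≠ 0) :
    R21 q * (L1 (Lp q) * L2 (Lp q)) = L2 (Lp q) * L1 (Lp q) * R21 q := by
  rw [Lp_eq hq]
  refine R21_mul_L1_mul_L2_of_blocks q _ _ fun i j l m => ?_
  fin_cases i <;> fin_cases j <;> fin_cases l <;> fin_cases m <;>
    simp [RAC, Fin.sum_univ_two, Matrix.smul_of, ← Matrix.zero_empty] <;> grind

lemma R21_mul_L1_Lm_mul_L2_Lm (hq : q ≠ 0) :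
    R21 q * (L1 (Lm q) * L2 (Lm q)) = L2 (Lm q) * L1 (Lm q) * R21 q := by
  rw [Lm_eq hq]
  refine R21_mul_L1_mul_L2_of_blocks q _ _ fun i j l m => ?_
  fin_cases i <;> fin_cases j <;> fin_cases l <;> fin_cases m <;>
    simp [RAC, Fin.sum_univ_two, Matrix.smul_of, ← Matrix.zero_empty] <;> grind

lemma R21_mul_L1_Lp_mul_L2_Lm (hq : q ≠ 0) :
    R21 q * (L1 (Lp q) * L2 (Lm q)) = L2 (Lm q) * L1 (Lp q) * R21 q := by
  rw [Lp_eq hq, Lm_eq hq]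
  refine R21_mul_L1_mul_L2_of_blocks q _ _ fun i j l m => ?_
  fin_cases i <;> fin_cases j <;> fin_cases l <;> fin_cases m <;>
    simp [RAC, Fin.sum_univ_two, Matrix.smul_of, ← Matrix.zero_empty] <;> grind

end Explicit

theorem FRT_relations_general (q : ℂ) (hq : q ≠ 0) :
    R21 q * (L1 (Lp q) * L2 (Lp q)) = L2 (Lp q) * L1 (Lp q) * R21 q ∧
    R21 q * (L1 (Lm q) * L2 (Lm q)) = L2 (Lm q) * L1 (Lm q) * R21 q ∧
    R21 q * (L1 (Lp q) * L2 (Lm q)) = L2 (Lm q) * L1 (Lp q) * R21 q :=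
  ⟨R21_mul_L1_Lp_mul_L2_Lp hq, R21_mul_L1_Lm_mul_L2_Lm hq, R21_mul_L1_Lp_mul_L2_Lm hq⟩

/-- The FRT relations hold for the Alexander–Conway R-matrix in the canonical
representation: `R₂₁L⁺₁L⁺₂ = L⁺₂L⁺₁R₂₁`, `R₂₁L⁻₁L⁻₂ = L⁻₂L⁻₁R₂₁` and
`R₂₁L⁺₁L⁻₂ = L⁻₂L⁺₁R₂₁`. -/
theorem FRT_relations (q : ℂ) (hq : q ≠ 0) (hq2 : q ^ 2 ≠ 1) :
    R21 q * (L1 (Lp q) * L2 (Lp q)) = L2 (Lp q) * L1 (Lp q) * R21 q ∧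
    R21 q * (L1 (Lm q) * L2 (Lm q)) = L2 (Lm q) * L1 (Lm q) * R21 q ∧
    R21 q * (L1 (Lp q) * L2 (Lm q)) = L2 (Lm q) * L1 (Lp q) * R21 q :=
  FRT_relations_general q hq
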